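/- Let B = B'⊕B'', C = C'⊕C'' over a field k, let W' ⊆ B'⊗C' and W'' ⊆ B''⊗C'' be linear subspaces, W = W'⊕W'', and fix a minimal decomposition V of W with the associated minimal subspaces E' ⊆ B', E'' ⊆ B'', F' ⊆ C', F'' ⊆ C'' of dimensions e', e'', f', f''. Then the following inequalities hold: R(W') + e'' ≤ R(W) − dim W'', R(W'') + e' ≤ R(W) − dim W', R(W') + f'' ≤ R(W) − dim W'', and R(W'') + f' ≤ R(W) − dim W'. -/

import Mathlib

open TensorProduct Module

noncomputable section

variable (k : Type*) [Field k]

/-- The rank of a linear subspace `W ⊆ B⊗C`: the minimal number `r` of rank-one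
tensors whose span contains `W`. -/
def sRank {B C : Type*} [AddCommGroup B] [Module k B]
    [AddCommGroup C] [Module k C] (W : Submodule k (B ⊗[k] C)) : ℕ :=
  sInf {r : ℕ | ∃ (b : Fin r → B) (c : Fin r → C),
    W ≤ Submodule.span k (Set.range fun i => b i ⊗ₜ[k] c i)}

variable (B' B'' C' C'' : Type*)
  [AddCommGroup B'] [Module k B'] [AddCommGroup B''] [Module k B'']
  [AddCommGroup C'] [Module k C'] [AddCommGroup C''] [Module k C'']

/-- Inclusion of `B'⊗C'` into `(B'⊕B'')⊗(C'⊕C'')`. -/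
def incl2L : (B' ⊗[k] C') →ₗ[k] ((B' × B'') ⊗[k] (C' × C'')) :=
  TensorProduct.map (LinearMap.inl k B' B'') (LinearMap.inl k C' C'')

/-- Inclusion of `B''⊗C''` into `(B'⊕B'')⊗(C'⊕C'')`. -/
def incl2R : (B'' ⊗[k] C'') →ₗ[k] ((B' × B'') ⊗[k] (C' × C'')) :=
  TensorProduct.map (LinearMap.inr k B' B'') (LinearMap.inr k C' C'')

/-- The projection `π_{C'} : B⊗C → B⊗C''` with kernel `B⊗C'`. -/
def projC' : ((B' × B'') ⊗[k] (C' × C'')) →ₗ[k] ((B' × B'') ⊗[k] C'') :=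
  TensorProduct.map LinearMap.id (LinearMap.snd k C' C'')

/-- The projection `π_{C''} : B⊗C → B⊗C'` with kernel `B⊗C''`. -/
def projC'' : ((B' × B'') ⊗[k] (C' × C'')) →ₗ[k] ((B' × B'') ⊗[k] C') :=
  TensorProduct.map LinearMap.id (LinearMap.fst k C' C'')

/-- The projection `π_{B'} : B⊗C → B''⊗C` with kernel `B'⊗C`. -/
def projB' : ((B' × B'') ⊗[k] (C' × C'')) →ₗ[k] (B'' ⊗[k] (C' × C'')) :=
  TensorProduct.map (LinearMap.snd k B' B'') LinearMap.id

/-- The projection `π_{B''} : B⊗C → B'⊗C` with kernel `B''⊗C`. -/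
def projB'' : ((B' × B'') ⊗[k] (C' × C'')) →ₗ[k] (B' ⊗[k] (C' × C'')) :=
  TensorProduct.map (LinearMap.fst k B' B'') LinearMap.id

/-- `π_{C'}(V) ⊆ (E₀⊕B'')⊗C''` for a subspace `E₀ ⊆ B'`. -/
def CondE' (V : Submodule k ((B' × B'') ⊗[k] (C' × C''))) (E₀ : Submodule k B') : Prop :=
  Submodule.map (projC' k B' B'' C' C'') V ≤
    LinearMap.range (TensorProduct.map (E₀.prod (⊤ : Submodule k B'')).subtype
      (LinearMap.id : C'' →ₗ[k] C''))

/-- `π_{C''}(V) ⊆ (B'⊕E₀)⊗C'` for a subspace `E₀ ⊆ B''`. -/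
def CondE'' (V : Submodule k ((B' × B'') ⊗[k] (C' × C''))) (E₀ : Submodule k B'') : Prop :=
  Submodule.map (projC'' k B' B'' C' C'') V ≤
    LinearMap.range (TensorProduct.map ((⊤ : Submodule k B').prod E₀).subtype
      (LinearMap.id : C' →ₗ[k] C'))

/-- `π_{B'}(V) ⊆ B''⊗(F₀⊕C'')` for a subspace `F₀ ⊆ C'`. -/
def CondF' (V : Submodule k ((B' × B'') ⊗[k] (C' × C''))) (F₀ : Submodule k C') : Prop :=
  Submodule.map (projB' k B' B'' C' C'') V ≤
    LinearMap.range (TensorProduct.map (LinearMap.id : B'' →ₗ[k] B'')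
      (F₀.prod (⊤ : Submodule k C'')).subtype)

/-- `π_{B''}(V) ⊆ B'⊗(C'⊕F₀)` for a subspace `F₀ ⊆ C''`. -/
def CondF'' (V : Submodule k ((B' × B'') ⊗[k] (C' × C''))) (F₀ : Submodule k C'') : Prop :=
  Submodule.map (projB'' k B' B'' C' C'') V ≤
    LinearMap.range (TensorProduct.map (LinearMap.id : B' →ₗ[k] B')
      ((⊤ : Submodule k C').prod F₀).subtype)

section Helpers

variable {k}
variable {B C D E : Type*} [AddCommGroup B] [Module k B] [AddCommGroup C] [Module k C]
  [AddCommGroup D] [Module k D] [AddCommGroup E] [Module k E]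

lemma sRank_le {W : Submodule k (B ⊗[k] C)} {r : ℕ} (b : Fin r → B) (c : Fin r → C)
    (h : W ≤ Submodule.span k (Set.range fun i => b i ⊗ₜ[k] c i)) : sRank k W ≤ r :=
  Nat.sInf_le ⟨b, c, h⟩

lemma sRank_set_nonempty [FiniteDimensional k B] [FiniteDimensional k C]
    (W : Submodule k (B ⊗[k] C)) :
    {r : ℕ | ∃ (b : Fin r → B) (c : Fin r → C),
      W ≤ Submodule.span k (Set.range fun i => b i ⊗ₜ[k] c i)}.Nonempty := by
  classical
  refine ⟨finrank k B * finrank k C,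
    fun i => finBasis k B (finProdFinEquiv.symm i).1,
    fun i => finBasis k C (finProdFinEquiv.symm i).2, le_trans le_top (le_of_eq ?_)⟩
  have h0 : (fun i : Fin (finrank k B * finrank k C) =>
      (finBasis k B) (finProdFinEquiv.symm i).1 ⊗ₜ[k] (finBasis k C) (finProdFinEquiv.symm i).2)
      = (((finBasis k B).tensorProduct (finBasis k C)) ∘ finProdFinEquiv.symm) := by
    funext i
    simp [Function.comp, Basis.tensorProduct_apply']
  rw [h0, Function.Surjective.range_comp finProdFinEquiv.symm.surjective, Basis.span_eq]

lemma sRank_map_le [FiniteDimensional k B] [FiniteDimensional k C]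
    (f : (B ⊗[k] C) →ₗ[k] (D ⊗[k] E)) (hf : ∀ b c, ∃ d e, f (b ⊗ₜ[k] c) = d ⊗ₜ[k] e)
    (W : Submodule k (B ⊗[k] C)) : sRank k (W.map f) ≤ sRank k W := by
  obtain ⟨b, c, h⟩ : ∃ (b : Fin (sRank k W) → B) (c : Fin (sRank k W) → C),
      W ≤ Submodule.span k (Set.range fun i => b i ⊗ₜ[k] c i) :=
    Nat.sInf_mem (sRank_set_nonempty W)
  choose d e hde using fun i => hf (b i) (c i)
  refine sRank_le d e ?_
  calc W.map f ≤ (Submodule.span k (Set.range fun i => b i ⊗ₜ[k] c i)).map f :=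
        Submodule.map_mono h
    _ = Submodule.span k (f '' (Set.range fun i => b i ⊗ₜ[k] c i)) := Submodule.map_span _ _
    _ = Submodule.span k (Set.range (f ∘ fun i => b i ⊗ₜ[k] c i)) := by
        rw [Set.range_comp]
    _ = Submodule.span k (Set.range fun i => d i ⊗ₜ[k] e i) :=
        congrArg (fun g => Submodule.span k (Set.range g)) (funext hde)

lemma exists_enum {M : Type*} [AddCommGroup M] [Module k M] {T : Set M}
    (hfin : T.Finite) (hind : LinearIndependent k ((↑) : T → M)) :
    ∃ (m : ℕ) (t : Fin m → M), LinearIndependent k t ∧ Set.range t = T := by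
  haveI := hfin.fintype
  refine ⟨Fintype.card T, fun i => ((Fintype.equivFin T).symm i : M),
    hind.comp _ (Equiv.injective _), ?_⟩
  ext x
  constructor
  · rintro ⟨i, rfl⟩; exact ((Fintype.equivFin T).symm i).2
  · intro hx; exact ⟨Fintype.equivFin T ⟨x, hx⟩, by simp⟩

set_option maxHeartbeats 1000000 in
lemma main_core {BB CC B₁ B₂ C₁ C₂ : Type*}
    [AddCommGroup BB] [Module k BB] [AddCommGroup CC] [Module k CC]
    [AddCommGroup B₁] [Module k B₁] [AddCommGroup B₂] [Module k B₂]
    [AddCommGroup C₁] [Module k C₁] [AddCommGroup C₂] [Module k C₂]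
    [FiniteDimensional k BB] [FiniteDimensional k CC]
    [FiniteDimensional k B₂] [FiniteDimensional k C₁]
    (iB₁ : B₁ →ₗ[k] BB) (iB₂ : B₂ →ₗ[k] BB) (pB₁ : BB →ₗ[k] B₁) (pB₂ : BB →ₗ[k] B₂)
    (iC₁ : C₁ →ₗ[k] CC) (iC₂ : C₂ →ₗ[k] CC) (pC₁ : CC →ₗ[k] C₁) (pC₂ : CC →ₗ[k] C₂)
    (hpB₁iB₁ : pB₁.comp iB₁ = LinearMap.id) (hpB₂iB₂ : pB₂.comp iB₂ = LinearMap.id)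
    (hpB₂iB₁ : pB₂.comp iB₁ = 0)
    (hpC₁iC₁ : pC₁.comp iC₁ = LinearMap.id) (hpC₂iC₂ : pC₂.comp iC₂ = LinearMap.id)
    (hpC₁iC₂ : pC₁.comp iC₂ = 0)
    (W₁ : Submodule k (B₁ ⊗[k] C₁)) (W₂ : Submodule k (B₂ ⊗[k] C₂))
    (V : Submodule k (BB ⊗[k] CC))
    (hW₁ : W₁.map (TensorProduct.map iB₁ iC₁) ≤ V)
    (hW₂ : W₂.map (TensorProduct.map iB₂ iC₂) ≤ V)
    (S : Set (BB ⊗[k] CC)) (hS : ∀ v ∈ S, ∃ b c, v = b ⊗ₜ[k] c)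
    (hVS : V = Submodule.span k S)
    (E : Submodule k B₂)
    (hmin : ∀ E₀ : Submodule k B₂,
      Submodule.map (TensorProduct.map LinearMap.id pC₁) V ≤
        LinearMap.range (TensorProduct.map (Submodule.comap pB₂ E₀).subtype
          (LinearMap.id : C₁ →ₗ[k] C₁)) → E ≤ E₀) :
    sRank k W₁ + finrank k E + finrank k W₂ ≤ finrank k V := by
  classical
  set ι₁ := TensorProduct.map iB₁ iC₁ with hι₁def
  set ι₂ := TensorProduct.map iB₂ iC₂ with hι₂def
  set π := TensorProduct.map (LinearMap.id : BB →ₗ[k] BB) pC₁ with hπdef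
  -- Part 1 : rank-nullity bound
  have hπι₂ : π.comp ι₂ = 0 := by
    rw [hπdef, hι₂def, ← TensorProduct.map_comp, hpC₁iC₂]
    apply TensorProduct.ext'
    intro b c
    simp
  have hι₂inj : Function.Injective ι₂ := by
    have hcomp : (TensorProduct.map pB₂ pC₂).comp ι₂ = LinearMap.id := by
      rw [hι₂def, ← TensorProduct.map_comp, hpB₂iB₂, hpC₂iC₂, TensorProduct.map_id]
    intro x y hxy
    have h2 := congrArg (TensorProduct.map pB₂ pC₂) hxy
    rwa [← LinearMap.comp_apply, ← LinearMap.comp_apply, hcomp, LinearMap.id_apply,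
      LinearMap.id_apply] at h2
  have hrn := LinearMap.finrank_range_add_finrank_ker (π.domRestrict V)
  rw [LinearMap.range_domRestrict] at hrn
  have hW₂ker : finrank k W₂ ≤ finrank k (LinearMap.ker (π.domRestrict V)) := by
    have hmemV : ∀ w : W₂, ι₂ (w : B₂ ⊗[k] C₂) ∈ V := fun w => hW₂ ⟨w, w.2, rfl⟩
    let θ₀ : W₂ →ₗ[k] V := LinearMap.codRestrict V (ι₂.comp W₂.subtype) hmemV
    have hθ₀ker : ∀ w : W₂, (π.domRestrict V) (θ₀ w) = 0 := by
      intro w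
      show π (ι₂ w) = 0
      rw [← LinearMap.comp_apply, hπι₂]
      rfl
    let θ : W₂ →ₗ[k] LinearMap.ker (π.domRestrict V) :=
      LinearMap.codRestrict _ θ₀ (fun w => LinearMap.mem_ker.2 (hθ₀ker w))
    have hθinj : Function.Injective θ := by
      intro a b hab
      have h1 : ι₂ (a : B₂ ⊗[k] C₂) = ι₂ (b : B₂ ⊗[k] C₂) :=
        congrArg (fun x : LinearMap.ker (π.domRestrict V) => ((x : V) : BB ⊗[k] CC)) hab
      exact Subtype.ext (hι₂inj h1)
    exact LinearMap.finrank_le_finrank_of_injective hθinj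
  -- Part 2 : enumerate a rank-one basis of X = π(V)
  have hXspan : V.map π = Submodule.span k (π '' S) := by rw [hVS, Submodule.map_span]
  obtain ⟨T, hTsub, hTspan, hTind⟩ := exists_linearIndependent k (π '' S)
  have hTfin : T.Finite := hTind.setFinite
  obtain ⟨m, t, htind, htrange⟩ := exists_enum hTfin hTind
  have htspan : Submodule.span k (Set.range t) = V.map π := by rw [htrange, hTspan, ← hXspan]
  have hm : finrank k (V.map π) = m := by
    rw [← htspan, finrank_span_eq_card htind, Fintype.card_fin]
  have hpure : ∀ i, ∃ (b : BB) (c : C₁), t i = b ⊗ₜ[k] c := by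
    intro i
    have hti : t i ∈ π '' S := hTsub (htrange ▸ Set.mem_range_self i)
    obtain ⟨s, hsS, hst⟩ := hti
    obtain ⟨b, c, rfl⟩ := hS s hsS
    exact ⟨b, pC₁ c, by rw [← hst, hπdef]; simp⟩
  choose β γ hβγ using hpure
  -- Part 3 : E ≤ E₀
  set E₀ := Submodule.span k (Set.range fun i => pB₂ (β i)) with hE₀def
  have hE₀cond : Submodule.map (TensorProduct.map LinearMap.id pC₁) V ≤
      LinearMap.range (TensorProduct.map (Submodule.comap pB₂ E₀).subtype
        (LinearMap.id : C₁ →ₗ[k] C₁)) := by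
    rw [← hπdef, show Submodule.map π V = V.map π from rfl, ← htspan, Submodule.span_le]
    rintro _ ⟨i, rfl⟩
    refine ⟨(⟨β i, Submodule.mem_comap.2 (Submodule.subset_span ⟨i, rfl⟩)⟩ :
      (Submodule.comap pB₂ E₀)) ⊗ₜ[k] γ i, ?_⟩
    rw [hβγ i]; simp
  have hEle : finrank k E ≤ finrank k E₀ := Submodule.finrank_mono (hmin E₀ hE₀cond)
  -- Part 4 : basis of E₀
  obtain ⟨G, hGsub, hGspan, hGind⟩ := exists_linearIndependent k (Set.range fun i => pB₂ (β i))
  have hGfin : G.Finite := hGind.setFinite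
  obtain ⟨p, g, hgind, hgrange⟩ := exists_enum hGfin hGind
  have hgG : ∀ j, g j ∈ G := fun j => hgrange ▸ Set.mem_range_self j
  have hginj : Function.Injective g := hgind.injective
  have hE₀rank : finrank k E₀ = p := by
    rw [hE₀def, ← hGspan, ← hgrange, finrank_span_eq_card hgind, Fintype.card_fin]
  have hτex : ∀ j, ∃ i, pB₂ (β i) = g j := fun j => hGsub (hgG j)
  choose τ hτ using hτex
  have hτinj : Function.Injective τ := fun j j' h => hginj (by rw [← hτ j, ← hτ j', h])
  set bE := Basis.extend hGind with hbEdef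
  have hGext : G ⊆ (show LinearIndepOn k id G from hGind).extend (Set.subset_univ G) :=
    (show LinearIndepOn k id G from hGind).subset_extend _
  set idx : Fin p → (show LinearIndepOn k id G from hGind).extend (Set.subset_univ G) := fun j => ⟨g j, hGext (hgG j)⟩ with hidxdef
  have hidxinj : Function.Injective idx := fun j j' h => hginj (congrArg Subtype.val h)
  set c : Fin m → Fin p → k := fun i j => bE.repr (pB₂ (β i)) (idx j) with hcdef
  have hPropB : ∀ j₀ j, c (τ j₀) j = if j = j₀ then 1 else 0 := by
    intro j₀ j
    rw [hcdef]
    simp only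
    rw [hτ j₀]
    have hgb : g j₀ = bE (idx j₀) := (Basis.extend_apply_self hGind (idx j₀)).symm
    rw [hgb, bE.repr_self, Finsupp.single_apply]
    by_cases h : j = j₀
    · simp [h]
    · rw [if_neg (fun hh => h (hidxinj hh).symm), if_neg h]
  -- Part 5 : the modified rank-one tensors
  set u : Fin m → B₁ := fun i => pB₁ (β i) - ∑ j, c i j • pB₁ (β (τ j)) with hudef
  have huJ : ∀ j₀, u (τ j₀) = 0 := by
    intro j₀
    rw [hudef]
    simp only
    have h1 : ∀ j, c (τ j₀) j • pB₁ (β (τ j)) = if j = j₀ then pB₁ (β (τ j)) else 0 := by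
      intro j; rw [hPropB]; by_cases h : j = j₀ <;> simp [h]
    rw [Finset.sum_congr rfl (fun j _ => h1 j), Finset.sum_ite_eq' Finset.univ j₀
      (fun j => pB₁ (β (τ j)))]
    simp
  set J := Finset.image τ Finset.univ with hJdef
  have hJcard : J.card = p := by
    rw [hJdef, Finset.card_image_of_injective _ hτinj, Finset.card_univ, Fintype.card_fin]
  have hcard : (Finset.univ \ J).card = m - p := by
    rw [Finset.card_sdiff_of_subset (Finset.subset_univ J), Finset.card_univ, Fintype.card_fin, hJcard]
  have hpm : p ≤ m := by
    have h2 := Finset.card_le_card (Finset.subset_univ J)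
    rwa [hJcard, Finset.card_univ, Fintype.card_fin] at h2
  have hπι₁ : π.comp ι₁ = TensorProduct.map iB₁ (LinearMap.id : C₁ →ₗ[k] C₁) := by
    rw [hπdef, hι₁def, ← TensorProduct.map_comp, LinearMap.id_comp, hpC₁iC₁]
  set P := TensorProduct.map pB₁ (LinearMap.id : C₁ →ₗ[k] C₁) with hPdef
  set P₂ := TensorProduct.map pB₂ (LinearMap.id : C₁ →ₗ[k] C₁) with hP₂def
  have hP : P.comp (TensorProduct.map iB₁ (LinearMap.id : C₁ →ₗ[k] C₁)) = LinearMap.id := by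
    rw [hPdef, ← TensorProduct.map_comp, hpB₁iB₁, LinearMap.id_comp, TensorProduct.map_id]
  have hP₂ : P₂.comp (TensorProduct.map iB₁ (LinearMap.id : C₁ →ₗ[k] C₁)) = 0 := by
    rw [hP₂def, ← TensorProduct.map_comp, hpB₂iB₁]
    apply TensorProduct.ext'
    intro b c
    simp
  have hclaim : W₁ ≤ Submodule.span k ((fun i => u i ⊗ₜ[k] γ i) '' ↑(Finset.univ \ J)) := by
    intro w hw
    have hxV : ι₁ w ∈ V := hW₁ ⟨w, hw, rfl⟩
    have hxX : (TensorProduct.map iB₁ (LinearMap.id : C₁ →ₗ[k] C₁)) w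
        ∈ Submodule.span k (Set.range t) := by
      rw [htspan]
      exact ⟨ι₁ w, hxV, by rw [← LinearMap.comp_apply, hπι₁]⟩
    obtain ⟨a, ha⟩ := (Submodule.mem_span_range_iff_exists_fun k).1 hxX
    have eq1 : ∑ i, a i • (pB₁ (β i) ⊗ₜ[k] γ i) = w := by
      have h2 := congrArg P ha
      rw [map_sum, ← LinearMap.comp_apply, hP, LinearMap.id_apply] at h2
      rw [← h2]
      refine Finset.sum_congr rfl fun i _ => ?_
      rw [map_smul, hβγ i, hPdef]
      simp
    have eq2 : ∑ i, a i • (pB₂ (β i) ⊗ₜ[k] γ i) = 0 := by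
      have h2 := congrArg P₂ ha
      rw [map_sum, ← LinearMap.comp_apply, hP₂, LinearMap.zero_apply] at h2
      rw [← h2]
      refine Finset.sum_congr rfl fun i _ => ?_
      rw [map_smul, hβγ i, hP₂def]
      simp
    have eq3 : ∀ j, ∑ i, (a i * c i j) • γ i = 0 := by
      intro j
      have h2 := congrArg ((TensorProduct.lid k C₁).toLinearMap.comp
        (LinearMap.rTensor C₁ (bE.coord (idx j)))) eq2
      rw [map_sum, map_zero] at h2
      rw [← h2]
      refine Finset.sum_congr rfl fun i _ => ?_
      rw [map_smul, LinearMap.comp_apply, LinearMap.rTensor_tmul]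
      rw [LinearEquiv.coe_coe, TensorProduct.lid_tmul, Basis.coord_apply, smul_smul, hcdef]
    have eq4 : ∑ i, a i • (u i ⊗ₜ[k] γ i) = w := by
      have expand : ∀ i, a i • (u i ⊗ₜ[k] γ i)
          = a i • (pB₁ (β i) ⊗ₜ[k] γ i) - ∑ j, (a i * c i j) • (pB₁ (β (τ j)) ⊗ₜ[k] γ i) := by
        intro i
        have h3 : u i ⊗ₜ[k] γ i
            = pB₁ (β i) ⊗ₜ[k] γ i - ∑ j, c i j • (pB₁ (β (τ j)) ⊗ₜ[k] γ i) := by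
          rw [hudef]
          simp only [TensorProduct.sub_tmul, TensorProduct.sum_tmul, TensorProduct.smul_tmul']
        rw [h3, smul_sub, Finset.smul_sum]
        congr 1
        refine Finset.sum_congr rfl fun j _ => ?_
        rw [smul_smul]
      rw [Finset.sum_congr rfl fun i _ => expand i, Finset.sum_sub_distrib, eq1,
        Finset.sum_comm]
      have hzero : ∀ j, ∑ i, (a i * c i j) • (pB₁ (β (τ j)) ⊗ₜ[k] γ i) = 0 := by
        intro j
        have h4 : ∀ i, (a i * c i j) • (pB₁ (β (τ j)) ⊗ₜ[k] γ i)
            = pB₁ (β (τ j)) ⊗ₜ[k] ((a i * c i j) • γ i) := fun i =>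
          (TensorProduct.tmul_smul _ _ _).symm
        rw [Finset.sum_congr rfl fun i _ => h4 i, ← TensorProduct.tmul_sum, eq3 j,
          TensorProduct.tmul_zero]
      rw [Finset.sum_congr rfl fun j _ => hzero j]
      simp
    rw [← eq4]
    have hsplit : ∑ i, a i • (u i ⊗ₜ[k] γ i)
        = ∑ i ∈ Finset.univ \ J, a i • (u i ⊗ₜ[k] γ i) := by
      symm
      apply Finset.sum_subset (Finset.sdiff_subset)
      intro i _ hiJ
      have hiJ' : i ∈ J := by
        by_contra hne
        exact hiJ (Finset.mem_sdiff.2 ⟨Finset.mem_univ i, hne⟩)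
      obtain ⟨j₀, _, rfl⟩ := Finset.mem_image.1 (hJdef ▸ hiJ')
      rw [huJ j₀]
      simp
    rw [hsplit]
    refine Submodule.sum_mem _ fun i hi => Submodule.smul_mem _ _ (Submodule.subset_span ?_)
    exact ⟨i, hi, rfl⟩
  have hsr : sRank k W₁ ≤ (Finset.univ \ J).card := by
    refine sRank_le (fun i => u (((Finset.univ \ J).equivFin.symm i : Fin m)))
      (fun i => γ (((Finset.univ \ J).equivFin.symm i : Fin m))) ?_
    refine hclaim.trans (Submodule.span_mono ?_)
    rintro _ ⟨i, hi, rfl⟩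
    exact ⟨(Finset.univ \ J).equivFin ⟨i, hi⟩, by simp⟩
  rw [hcard] at hsr
  omega



set_option maxHeartbeats 1000000 in
lemma main_core_right {BB CC B₁ B₂ C₁ C₂ : Type*}
    [AddCommGroup BB] [Module k BB] [AddCommGroup CC] [Module k CC]
    [AddCommGroup B₁] [Module k B₁] [AddCommGroup B₂] [Module k B₂]
    [AddCommGroup C₁] [Module k C₁] [AddCommGroup C₂] [Module k C₂]
    [FiniteDimensional k BB] [FiniteDimensional k CC]
    [FiniteDimensional k B₁] [FiniteDimensional k B₂]
    [FiniteDimensional k C₁] [FiniteDimensional k C₂]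
    (iB₁ : B₁ →ₗ[k] BB) (iB₂ : B₂ →ₗ[k] BB) (pB₁ : BB →ₗ[k] B₁) (pB₂ : BB →ₗ[k] B₂)
    (iC₁ : C₁ →ₗ[k] CC) (iC₂ : C₂ →ₗ[k] CC) (pC₁ : CC →ₗ[k] C₁) (pC₂ : CC →ₗ[k] C₂)
    (hpB₁iB₁ : pB₁.comp iB₁ = LinearMap.id) (hpB₂iB₂ : pB₂.comp iB₂ = LinearMap.id)
    (hpB₁iB₂ : pB₁.comp iB₂ = 0)
    (hpC₁iC₁ : pC₁.comp iC₁ = LinearMap.id) (hpC₂iC₂ : pC₂.comp iC₂ = LinearMap.id)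
    (hpC₂iC₁ : pC₂.comp iC₁ = 0)
    (W₁ : Submodule k (B₁ ⊗[k] C₁)) (W₂ : Submodule k (B₂ ⊗[k] C₂))
    (V : Submodule k (BB ⊗[k] CC))
    (hW₁ : W₁.map (TensorProduct.map iB₁ iC₁) ≤ V)
    (hW₂ : W₂.map (TensorProduct.map iB₂ iC₂) ≤ V)
    (S : Set (BB ⊗[k] CC)) (hS : ∀ v ∈ S, ∃ b c, v = b ⊗ₜ[k] c)
    (hVS : V = Submodule.span k S)
    (F : Submodule k C₂)
    (hmin : ∀ F₀ : Submodule k C₂,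
      Submodule.map (TensorProduct.map pB₁ LinearMap.id) V ≤
        LinearMap.range (TensorProduct.map (LinearMap.id : B₁ →ₗ[k] B₁)
          (Submodule.comap pC₂ F₀).subtype) → F ≤ F₀) :
    sRank k W₁ + finrank k F + finrank k W₂ ≤ finrank k V := by
  classical
  set Θ := TensorProduct.comm k BB CC with hΘdef
  set V' := V.map Θ.toLinearMap with hV'def
  set W₁' := W₁.map (TensorProduct.comm k B₁ C₁).toLinearMap with hW₁'def
  set W₂' := W₂.map (TensorProduct.comm k B₂ C₂).toLinearMap with hW₂'def
  have hcomm₁ : (TensorProduct.map iC₁ iB₁).comp (TensorProduct.comm k B₁ C₁).toLinearMap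
      = Θ.toLinearMap.comp (TensorProduct.map iB₁ iC₁) := by
    apply TensorProduct.ext'
    intro b c
    simp [hΘdef]
  have hcomm₂ : (TensorProduct.map iC₂ iB₂).comp (TensorProduct.comm k B₂ C₂).toLinearMap
      = Θ.toLinearMap.comp (TensorProduct.map iB₂ iC₂) := by
    apply TensorProduct.ext'
    intro b c
    simp [hΘdef]
  have hW₁' : W₁'.map (TensorProduct.map iC₁ iB₁) ≤ V' := by
    rw [hW₁'def, hV'def, ← Submodule.map_comp, hcomm₁, Submodule.map_comp]
    exact Submodule.map_mono hW₁
  have hW₂' : W₂'.map (TensorProduct.map iC₂ iB₂) ≤ V' := by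
    rw [hW₂'def, hV'def, ← Submodule.map_comp, hcomm₂, Submodule.map_comp]
    exact Submodule.map_mono hW₂
  have hS' : ∀ v ∈ Θ.toLinearMap '' S, ∃ (c : CC) (b : BB), v = c ⊗ₜ[k] b := by
    rintro _ ⟨s, hsS, rfl⟩
    obtain ⟨b, c, rfl⟩ := hS s hsS
    exact ⟨c, b, by simp [hΘdef]⟩
  have hVS' : V' = Submodule.span k (Θ.toLinearMap '' S) := by
    rw [hV'def, hVS, Submodule.map_span]
  have hmin' : ∀ F₀ : Submodule k C₂,
      Submodule.map (TensorProduct.map LinearMap.id pB₁) V' ≤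
        LinearMap.range (TensorProduct.map (Submodule.comap pC₂ F₀).subtype
          (LinearMap.id : B₁ →ₗ[k] B₁)) → F ≤ F₀ := by
    intro F₀ h
    apply hmin F₀
    have hrel : (TensorProduct.map (LinearMap.id : CC →ₗ[k] CC) pB₁).comp Θ.toLinearMap
        = (TensorProduct.comm k B₁ CC).toLinearMap.comp
          (TensorProduct.map pB₁ (LinearMap.id : CC →ₗ[k] CC)) := by
      apply TensorProduct.ext'
      intro b c
      simp [hΘdef]
    have h2 : (Submodule.map (TensorProduct.map pB₁ (LinearMap.id : CC →ₗ[k] CC)) V).map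
          (TensorProduct.comm k B₁ CC).toLinearMap
        = Submodule.map (TensorProduct.map (LinearMap.id : CC →ₗ[k] CC) pB₁) V' := by
      rw [hV'def, ← Submodule.map_comp, ← Submodule.map_comp, hrel]
    intro x hx
    have hmem : (TensorProduct.comm k B₁ CC).toLinearMap x
        ∈ Submodule.map (TensorProduct.map (LinearMap.id : CC →ₗ[k] CC) pB₁) V' := by
      rw [← h2]
      exact ⟨x, hx, rfl⟩
    obtain ⟨y, hy⟩ := h hmem
    have hxeq : x = (TensorProduct.comm k B₁ CC).symm.toLinearMap
        ((TensorProduct.map (Submodule.comap pC₂ F₀).subtype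
          (LinearMap.id : B₁ →ₗ[k] B₁)) y) := by
      rw [hy]
      simp
    rw [hxeq]
    have hrel2 : (TensorProduct.comm k B₁ CC).symm.toLinearMap.comp
        (TensorProduct.map (Submodule.comap pC₂ F₀).subtype (LinearMap.id : B₁ →ₗ[k] B₁))
        = (TensorProduct.map (LinearMap.id : B₁ →ₗ[k] B₁)
            (Submodule.comap pC₂ F₀).subtype).comp
          (TensorProduct.comm k (Submodule.comap pC₂ F₀) B₁).toLinearMap := by
      apply TensorProduct.ext'
      intro b c
      simp
    rw [← LinearMap.comp_apply, hrel2]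
    exact ⟨_, rfl⟩
  have hmain := main_core iC₁ iC₂ pC₁ pC₂ iB₁ iB₂ pB₁ pB₂
    hpC₁iC₁ hpC₂iC₂ hpC₂iC₁ hpB₁iB₁ hpB₂iB₂ hpB₁iB₂
    W₁' W₂' V' hW₁' hW₂' (Θ.toLinearMap '' S) hS' hVS' F hmin'
  have hfrV : finrank k V' = finrank k V := by
    rw [hV'def]
    exact LinearEquiv.finrank_map_eq Θ V
  have hfrW₂ : finrank k W₂' = finrank k W₂ := by
    rw [hW₂'def]
    exact LinearEquiv.finrank_map_eq _ W₂
  have hsrW₁ : sRank k W₁ ≤ sRank k W₁' := by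
    have hid : W₁ = W₁'.map (TensorProduct.comm k B₁ C₁).symm.toLinearMap := by
      rw [hW₁'def, ← Submodule.map_comp]
      have hcc : (TensorProduct.comm k B₁ C₁).symm.toLinearMap.comp
          (TensorProduct.comm k B₁ C₁).toLinearMap = LinearMap.id := by
        apply TensorProduct.ext'
        intro b c
        simp
      rw [hcc, Submodule.map_id]
    rw [hid]
    apply sRank_map_le
    intro b c
    exact ⟨c, b, by simp⟩
  rw [hfrV, hfrW₂] at hmain
  omega

end Helpers


/-- Given a minimal decomposition `V` of `W = W'⊕W''` with associated
minimal spaces `E' ⊆ B'`, `E'' ⊆ B''`, `F' ⊆ C'`, `F'' ⊆ C''`, one has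
`R(W') + e'' ≤ R(W) − dim W''`, `R(W'') + e' ≤ R(W) − dim W'`,
`R(W') + f'' ≤ R(W) − dim W''` and `R(W'') + f' ≤ R(W) − dim W'`
(stated additively to avoid truncated subtraction). -/
theorem bounds_from_minimal_decomposition
    [FiniteDimensional k B'] [FiniteDimensional k B''] [FiniteDimensional k C']
    [FiniteDimensional k C'']
    (W' : Submodule k (B' ⊗[k] C')) (W'' : Submodule k (B'' ⊗[k] C''))
    (W V : Submodule k ((B' × B'') ⊗[k] (C' × C'')))
    (hW : W = Submodule.map (incl2L k B' B'' C' C'') W' ⊔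
      Submodule.map (incl2R k B' B'' C' C'') W'')
    (hWV : W ≤ V)
    (hVdim : finrank k V = sRank k W)
    (hVspan : ∃ S : Set ((B' × B'') ⊗[k] (C' × C'')),
      (∀ v ∈ S, ∃ b c, v = b ⊗ₜ[k] c) ∧ V = Submodule.span k S)
    (E' : Submodule k B') (E'' : Submodule k B'') (F' : Submodule k C') (F'' : Submodule k C'')
    (hE' : CondE' k B' B'' C' C'' V E' ∧
      ∀ E₀ : Submodule k B', CondE' k B' B'' C' C'' V E₀ → E' ≤ E₀)
    (hE'' : CondE'' k B' B'' C' C'' V E'' ∧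
      ∀ E₀ : Submodule k B'', CondE'' k B' B'' C' C'' V E₀ → E'' ≤ E₀)
    (hF' : CondF' k B' B'' C' C'' V F' ∧
      ∀ F₀ : Submodule k C', CondF' k B' B'' C' C'' V F₀ → F' ≤ F₀)
    (hF'' : CondF'' k B' B'' C' C'' V F'' ∧
      ∀ F₀ : Submodule k C'', CondF'' k B' B'' C' C'' V F₀ → F'' ≤ F₀) :
    (sRank k W' + finrank k E'' + finrank k W'' ≤ sRank k W) ∧
    (sRank k W'' + finrank k E' + finrank k W' ≤ sRank k W) ∧
    (sRank k W' + finrank k F'' + finrank k W'' ≤ sRank k W) ∧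
    (sRank k W'' + finrank k F' + finrank k W' ≤ sRank k W) := by
  classical
  obtain ⟨S, hSpure, hVS⟩ := hVspan
  have hcsB : ∀ (E₀ : Submodule k B''), Submodule.comap (LinearMap.snd k B' B'') E₀
      = (⊤ : Submodule k B').prod E₀ := by
    intro E₀; ext x; simp [Submodule.mem_prod]
  have hcfB : ∀ (E₀ : Submodule k B'), Submodule.comap (LinearMap.fst k B' B'') E₀
      = E₀.prod (⊤ : Submodule k B'') := by
    intro E₀; ext x; simp [Submodule.mem_prod]
  have hcsC : ∀ (F₀ : Submodule k C''), Submodule.comap (LinearMap.snd k C' C'') F₀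
      = (⊤ : Submodule k C').prod F₀ := by
    intro F₀; ext x; simp [Submodule.mem_prod]
  have hcfC : ∀ (F₀ : Submodule k C'), Submodule.comap (LinearMap.fst k C' C'') F₀
      = F₀.prod (⊤ : Submodule k C'') := by
    intro F₀; ext x; simp [Submodule.mem_prod]
  have hle1 : Submodule.map (TensorProduct.map (LinearMap.inl k B' B'') (LinearMap.inl k C' C'')) W' ≤ V :=
    le_trans (le_trans (le_of_eq rfl) (hW ▸ le_sup_left)) hWV
  have hle2 : Submodule.map (TensorProduct.map (LinearMap.inr k B' B'') (LinearMap.inr k C' C'')) W'' ≤ V :=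
    le_trans (hW ▸ le_sup_right) hWV
  refine ⟨?_, ?_, ?_, ?_⟩
  · rw [← hVdim]
    exact main_core (LinearMap.inl k B' B'') (LinearMap.inr k B' B'')
      (LinearMap.fst k B' B'') (LinearMap.snd k B' B'')
      (LinearMap.inl k C' C'') (LinearMap.inr k C' C'')
      (LinearMap.fst k C' C'') (LinearMap.snd k C' C'')
      (LinearMap.fst_comp_inl k B' B'') (LinearMap.snd_comp_inr k B' B'')
      (LinearMap.snd_comp_inl k B' B'')
      (LinearMap.fst_comp_inl k C' C'') (LinearMap.snd_comp_inr k C' C'')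
      (LinearMap.fst_comp_inr k C' C'')
      W' W'' V hle1 hle2 S hSpure hVS E''
      (fun E₀ h => hE''.2 E₀ (by rwa [hcsB E₀] at h))
  · rw [← hVdim]
    exact main_core (LinearMap.inr k B' B'') (LinearMap.inl k B' B'')
      (LinearMap.snd k B' B'') (LinearMap.fst k B' B'')
      (LinearMap.inr k C' C'') (LinearMap.inl k C' C'')
      (LinearMap.snd k C' C'') (LinearMap.fst k C' C'')
      (LinearMap.snd_comp_inr k B' B'') (LinearMap.fst_comp_inl k B' B'')
      (LinearMap.fst_comp_inr k B' B'')
      (LinearMap.snd_comp_inr k C' C'') (LinearMap.fst_comp_inl k C' C'')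
      (LinearMap.snd_comp_inl k C' C'')
      W'' W' V hle2 hle1 S hSpure hVS E'
      (fun E₀ h => hE'.2 E₀ (by rwa [hcfB E₀] at h))
  · rw [← hVdim]
    exact main_core_right (LinearMap.inl k B' B'') (LinearMap.inr k B' B'')
      (LinearMap.fst k B' B'') (LinearMap.snd k B' B'')
      (LinearMap.inl k C' C'') (LinearMap.inr k C' C'')
      (LinearMap.fst k C' C'') (LinearMap.snd k C' C'')
      (LinearMap.fst_comp_inl k B' B'') (LinearMap.snd_comp_inr k B' B'')
      (LinearMap.fst_comp_inr k B' B'')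
      (LinearMap.fst_comp_inl k C' C'') (LinearMap.snd_comp_inr k C' C'')
      (LinearMap.snd_comp_inl k C' C'')
      W' W'' V hle1 hle2 S hSpure hVS F''
      (fun F₀ h => hF''.2 F₀ (by rwa [hcsC F₀] at h))
  · rw [← hVdim]
    exact main_core_right (LinearMap.inr k B' B'') (LinearMap.inl k B' B'')
      (LinearMap.snd k B' B'') (LinearMap.fst k B' B'')
      (LinearMap.inr k C' C'') (LinearMap.inl k C' C'')
      (LinearMap.snd k C' C'') (LinearMap.fst k C' C'')
      (LinearMap.snd_comp_inr k B' B'') (LinearMap.fst_comp_inl k B' B'')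
      (LinearMap.snd_comp_inl k B' B'')
      (LinearMap.snd_comp_inr k C' C'') (LinearMap.fst_comp_inl k C' C'')
      (LinearMap.fst_comp_inr k C' C'')
      W'' W' V hle2 hle1 S hSpure hVS F'
      (fun F₀ h => hF'.2 F₀ (by rwa [hcfC F₀] at h))
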